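/- arXiv:1209.4256 — 3 statements merged into one kernel-verified Lean document; each statement's English description precedes it below -/
import Mathlib

section
/- Let R = Q/𝔤₁ where 𝔤₁ = (xy², xyz, yz², x⁴ − y³z, xz³ − y⁴) ⊆ Q. Then the socle (0 :_R 𝔪) of R is equal to the R-submodule generated by the images of x⁴y and x³z², and its dimension as a k-vector space is 2 (that is, R has type 2). -/
/-!
The monomials xy², xyz, yz², x⁵, x⁴z, y⁵, x²z³, xz⁵ all lie in g₁, so modulo g₁ a power series
only depends on its coefficients along the z-axis and at finitely many further monomials.
Coefficient functionals vanishing on g₁ control these: the coefficient at any monomial divisible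
by no monomial of a generator, and the pairings with the inverse-system elements
X⁴Y + Y⁴Z + XZ⁴ and X⁴ + Y³Z. Evaluated on x·f, y·f, z·f they force every remaining coefficient of
a socle element f to vanish except at x⁴y, y⁴z, xz⁴, x³z², x⁴, y³z, xz³, y⁴, and the surviving
ones combine to f ≡ a·x⁴y + b·x³z² (mod g₁). The same functionals separate x⁴y and x³z², and
since 𝔪 kills the socle, R acts on it through k, so its R-span is its k-span.
-/

noncomputable section

/-- The variable `x` in `Q = k[[x,y,z]]`. -/
def xx (k : Type*) [Field k] : MvPowerSeries (Fin 3) k := MvPowerSeries.X 0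
/-- The variable `y` in `Q = k[[x,y,z]]`. -/
def yy (k : Type*) [Field k] : MvPowerSeries (Fin 3) k := MvPowerSeries.X 1
/-- The variable `z` in `Q = k[[x,y,z]]`. -/
def zz (k : Type*) [Field k] : MvPowerSeries (Fin 3) k := MvPowerSeries.X 2

/-- The ideal `g1` of the paper. -/
def Ig1 (k : Type*) [Field k] : Ideal (MvPowerSeries (Fin 3) k) :=
  Ideal.span {xx k * yy k ^ 2, xx k * yy k * zz k, yy k * zz k ^ 2, xx k ^ 4 - yy k ^ 3 * zz k, xx k * zz k ^ 3 - yy k ^ 4}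

open MvPowerSeries

theorem AddMonoidHom.map_eq_zero_of_mem_ideal_span {A M : Type*} [CommSemiring A]
    [AddCommMonoid M] (L : A →+ M) {s : Set A} (hs : ∀ g ∈ s, ∀ q, L (q * g) = 0) {φ : A}
    (hφ : φ ∈ Ideal.span s) : L φ = 0 := by
  let J : Ideal A :=
    { carrier := {g | ∀ q, L (q * g) = 0}
      add_mem' := fun {g h} hg hh q => by simp only [mul_add, map_add, hg q, hh q, add_zero]
      zero_mem' := fun q => by simp
      smul_mem' := fun c g hg q => by simpa only [smul_eq_mul, ← mul_assoc] using hg (q * c) }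
  simpa using (Ideal.span_le.2 hs : Ideal.span s ≤ J) hφ 1

theorem Ideal.Quotient.bot_colon_map_mk {A : Type*} [CommRing A] (I J : Ideal A) :
    (⊥ : Ideal (A ⧸ I)).colon (Ideal.map (Ideal.Quotient.mk I) J) =
      Ideal.map (Ideal.Quotient.mk I) (I.colon J) := by
  ext r
  obtain ⟨f, rfl⟩ := Ideal.Quotient.mk_surjective r
  simp only [Ideal.mem_quotient_iff_mem Ideal.le_colon, Submodule.mem_colon, smul_eq_mul,
    Submodule.mem_bot]
  constructor
  · intro h j hj
    simpa [← map_mul, Ideal.Quotient.eq_zero_iff_mem] using h _ (Ideal.mem_map_of_mem _ hj)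
  · intro h p hp
    obtain ⟨j, hj, rfl⟩ := (Ideal.mem_map_iff_of_surjective _ Ideal.Quotient.mk_surjective).1 hp
    rw [← map_mul, Ideal.Quotient.eq_zero_iff_mem]
    exact h j hj

theorem Ideal.restrictScalars_span_eq_span_of_mul_eq_smul {k R : Type*} [CommSemiring k]
    [CommSemiring R] [Algebra k R] {s : Set R} (h : ∀ r : R, ∀ a ∈ s, ∃ c : k, r * a = c • a) :
    (Ideal.span s).restrictScalars k = Submodule.span k s := by
  have hsmul (r : R) {x : R} (hx : x ∈ Submodule.span k s) : r • x ∈ Submodule.span k s := by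
    induction hx using Submodule.span_induction with
    | mem a ha =>
      obtain ⟨c, hc⟩ := h r a ha
      rw [smul_eq_mul, hc]
      exact Submodule.smul_mem _ c (Submodule.subset_span ha)
    | zero => simp
    | add _ _ _ _ hx hy => rw [smul_add]; exact add_mem hx hy
    | smul c x _ hx => rw [smul_comm]; exact Submodule.smul_mem _ c hx
  refine le_antisymm (fun x hx => ?_) (Submodule.span_le_restrictScalars k R s)
  induction hx using Submodule.span_induction with
  | mem a ha => exact Submodule.subset_span ha
  | zero => exact zero_mem _
  | add _ _ _ _ hx hy => exact add_mem hx hy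
  | smul r x _ hx => exact hsmul r hx

namespace MvPowerSeries

variable {σ R : Type*} [CommRing R]

theorem coeff_eq_zero_of_mem_span {s : Set (MvPowerSeries σ R)} {e : σ →₀ ℕ}
    (hs : ∀ g ∈ s, ∀ m ≤ e, coeff m g = 0) {φ : MvPowerSeries σ R} (hφ : φ ∈ Ideal.span s) :
    coeff e φ = 0 := by
  classical
  refine (coeff e).toAddMonoidHom.map_eq_zero_of_mem_ideal_span (fun g hg q => ?_) hφ
  simp only [LinearMap.toAddMonoidHom_coe, coeff_mul]
  refine Finset.sum_eq_zero fun p hp => ?_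
  rw [hs g hg p.2 (Finset.HasAntidiagonal.antidiagonal.snd_le hp), mul_zero]

theorem coeff_sum_monomial_coeff [DecidableEq σ] (T : Finset (σ →₀ ℕ))
    (φ : MvPowerSeries σ R) (e : σ →₀ ℕ) :
    coeff e (∑ t ∈ T, monomial t (coeff t φ)) = if e ∈ T then coeff e φ else 0 := by
  simp only [map_sum, coeff_monomial, Finset.sum_ite_eq]

theorem mem_span_monomial_image (S : Finset (σ →₀ ℕ)) {φ : MvPowerSeries σ R}
    (h : ∀ e, coeff e φ ≠ 0 → ∃ s ∈ S, s ≤ e) :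
    φ ∈ Ideal.span ((monomial · 1) '' S) := by
  classical
  induction S using Finset.induction_on generalizing φ with
  | empty =>
    have : φ = 0 := ext fun e => by_contra fun he => by simpa using h e he
    simp [this]
  | insert s S _ ih =>
    let ψ : MvPowerSeries σ R := fun e => if s ≤ e then coeff e φ else 0
    let q : MvPowerSeries σ R := fun e => coeff (e + s) φ
    have hψ : ∀ e, coeff e ψ = if s ≤ e then coeff e φ else 0 := fun _ => rfl
    have hψq : ψ = monomial s 1 * q := by
      ext e
      rw [coeff_monomial_mul, hψ]
      split_ifs with hse
      · show coeff e φ = 1 * coeff (e - s + s) φ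
        rw [one_mul, tsub_add_cancel_of_le hse]
      · rfl
    rw [← add_sub_cancel ψ φ]
    refine add_mem ?_ (Ideal.span_mono (Set.image_mono (by simp)) (ih fun e he => ?_))
    · rw [hψq]
      exact Ideal.mul_mem_right _ _ (Ideal.subset_span ⟨s, by simp, rfl⟩)
    · rw [map_sub, hψ] at he
      split_ifs at he with hse
      · simp at he
      · obtain ⟨t, ht, hte⟩ := h e (by simpa using he)
        rcases Finset.mem_insert.1 ht with rfl | ht
        · exact absurd hte hse
        · exact ⟨t, ht, hte⟩

theorem sub_C_constantCoeff_mem_span_X [Finite σ] (φ : MvPowerSeries σ R) :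
    φ - C (constantCoeff φ) ∈ Ideal.span (Set.range X) := by
  classical
  have := Fintype.ofFinite σ
  refine Ideal.span_mono ?_ (mem_span_monomial_image (Finset.univ.image (Finsupp.single · 1))
    fun e he => ?_)
  · rintro _ ⟨_, ht, rfl⟩
    obtain ⟨i, -, rfl⟩ := Finset.mem_image.1 ht
    exact ⟨i, rfl⟩
  · obtain ⟨i, hi⟩ : ∃ i, e i ≠ 0 := by
      by_contra! h0
      obtain rfl : e = 0 := Finsupp.ext h0
      simp at he
    exact ⟨Finsupp.single i 1, by simp, Finsupp.single_le_iff.2 (Nat.one_le_iff_ne_zero.2 hi)⟩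

theorem smul_mk_eq_mk_C_mul {I : Ideal (MvPowerSeries σ R)} (c : R) (φ : MvPowerSeries σ R) :
    c • Ideal.Quotient.mk I φ = Ideal.Quotient.mk I (C c * φ) := by
  rw [← smul_eq_C_mul, ← Ideal.Quotient.mkₐ_eq_mk R, map_smul]

end MvPowerSeries

namespace Ig1

variable {k : Type*} [Field k]

def expo (a b c : ℕ) : Fin 3 →₀ ℕ :=
  Finsupp.single 0 a + Finsupp.single 1 b + Finsupp.single 2 c

@[simp]
theorem expo_le_expo {a b c a' b' c' : ℕ} :
    expo a b c ≤ expo a' b' c' ↔ a ≤ a' ∧ b ≤ b' ∧ c ≤ c' := by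
  simp [expo, Finsupp.le_def, Fin.forall_fin_succ, Finsupp.single_apply]

@[simp]
theorem expo_inj {a b c a' b' c' : ℕ} :
    expo a b c = expo a' b' c' ↔ a = a' ∧ b = b' ∧ c = c' := by
  simp only [le_antisymm_iff, expo_le_expo]
  tauto

@[simp]
theorem expo_sub (a b c a' b' c' : ℕ) :
    expo a b c - expo a' b' c' = expo (a - a') (b - b') (c - c') := by
  ext i
  fin_cases i <;> simp [expo]

theorem eq_expo (e : Fin 3 →₀ ℕ) : e = expo (e 0) (e 1) (e 2) := by
  ext i
  fin_cases i <;> simp [expo]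

theorem pow_mul_pow_mul_pow_eq_monomial (a b c : ℕ) :
    xx k ^ a * yy k ^ b * zz k ^ c = monomial (expo a b c) 1 := by
  simp only [xx, yy, zz, X_pow_eq, monomial_mul_monomial, mul_one, expo]

theorem monomial_expo_eq_C_mul (a b c : ℕ) (r : k) :
    monomial (expo a b c) r = C r * (xx k ^ a * yy k ^ b * zz k ^ c) := by
  rw [pow_mul_pow_mul_pow_eq_monomial, ← monomial_zero_eq_C_apply, monomial_mul_monomial,
    zero_add, mul_one]

theorem eq_span_monomial : Ig1 k = Ideal.span {monomial (expo 1 2 0) 1,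
    monomial (expo 1 1 1) 1, monomial (expo 0 1 2) 1,
    monomial (expo 4 0 0) 1 - monomial (expo 0 3 1) 1,
    monomial (expo 1 0 3) 1 - monomial (expo 0 4 0) 1} := by
  simp only [← pow_mul_pow_mul_pow_eq_monomial, pow_zero, pow_one, mul_one, one_mul, Ig1]

/-- `x^a y^b z^c` is divisible by none of the monomials occurring in the generators of `g₁`. -/
abbrev IsStandard (a b c : ℕ) : Prop :=
  ¬(1 ≤ a ∧ 2 ≤ b) ∧ ¬(1 ≤ a ∧ 1 ≤ b ∧ 1 ≤ c) ∧ ¬(1 ≤ b ∧ 2 ≤ c) ∧ a < 4 ∧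
    ¬(3 ≤ b ∧ 1 ≤ c) ∧ ¬(1 ≤ a ∧ 3 ≤ c) ∧ b < 4

theorem coeff_eq_zero_of_isStandard {a b c : ℕ} (h : IsStandard a b c)
    {g : MvPowerSeries (Fin 3) k} (hg : g ∈ Ig1 k) : coeff (expo a b c) g = 0 := by
  rw [eq_span_monomial] at hg
  refine coeff_eq_zero_of_mem_span (fun g hg m hm => ?_) hg
  rw [eq_expo m] at hm ⊢
  simp only [expo_le_expo] at hm
  simp only [Set.mem_insert_iff, Set.mem_singleton_iff] at hg
  unfold IsStandard at h
  rcases hg with rfl | rfl | rfl | rfl | rfl <;>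
    simp only [map_sub, coeff_monomial, expo_inj] <;> split_ifs <;> first | omega | simp

theorem coeff_x4y_add_y4z_add_xz4_eq_zero {g : MvPowerSeries (Fin 3) k} (hg : g ∈ Ig1 k) :
    coeff (expo 4 1 0) g + coeff (expo 0 4 1) g + coeff (expo 1 0 4) g = 0 := by
  rw [eq_span_monomial] at hg
  refine (coeff (expo 4 1 0) + coeff (expo 0 4 1) + coeff (expo 1 0 4)
    : MvPowerSeries (Fin 3) k →ₗ[k] k).toAddMonoidHom.map_eq_zero_of_mem_ideal_span
    (fun g hg q => ?_) hg
  simp only [Set.mem_insert_iff, Set.mem_singleton_iff] at hg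
  rcases hg with rfl | rfl | rfl | rfl | rfl <;>
    simp [mul_sub, coeff_mul_monomial]

theorem coeff_x4_add_y3z_eq_zero {g : MvPowerSeries (Fin 3) k} (hg : g ∈ Ig1 k) :
    coeff (expo 4 0 0) g + coeff (expo 0 3 1) g = 0 := by
  rw [eq_span_monomial] at hg
  refine (coeff (expo 4 0 0) + coeff (expo 0 3 1)
    : MvPowerSeries (Fin 3) k →ₗ[k] k).toAddMonoidHom.map_eq_zero_of_mem_ideal_span
    (fun g hg q => ?_) hg
  simp only [Set.mem_insert_iff, Set.mem_singleton_iff] at hg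
  rcases hg with rfl | rfl | rfl | rfl | rfl <;>
    simp [mul_sub, coeff_mul_monomial]

theorem xx_eq_monomial : xx k = monomial (expo 1 0 0) 1 := by
  simpa using pow_mul_pow_mul_pow_eq_monomial (k := k) 1 0 0

theorem yy_eq_monomial : yy k = monomial (expo 0 1 0) 1 := by
  simpa using pow_mul_pow_mul_pow_eq_monomial (k := k) 0 1 0

theorem zz_eq_monomial : zz k = monomial (expo 0 0 1) 1 := by
  simpa using pow_mul_pow_mul_pow_eq_monomial (k := k) 0 0 1

def monomialExps : Finset (Fin 3 →₀ ℕ) :=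
  {expo 1 2 0, expo 1 1 1, expo 0 1 2, expo 5 0 0, expo 4 0 1, expo 0 5 0, expo 2 0 3, expo 1 0 5}

theorem span_monomialExps_le : Ideal.span ((monomial · (1 : k)) '' monomialExps) ≤ Ig1 k := by
  have comb (a₁ a₂ a₃ a₄ a₅ : MvPowerSeries (Fin 3) k) :
      a₁ * (xx k * yy k ^ 2) + a₂ * (xx k * yy k * zz k) + a₃ * (yy k * zz k ^ 2) +
        a₄ * (xx k ^ 4 - yy k ^ 3 * zz k) + a₅ * (xx k * zz k ^ 3 - yy k ^ 4) ∈ Ig1 k := by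
    refine add_mem (add_mem (add_mem (add_mem ?_ ?_) ?_) ?_) ?_ <;>
      exact Ideal.mul_mem_left _ _ (Ideal.subset_span (by simp))
  rw [Ideal.span_le]
  rintro _ ⟨s, hs, rfl⟩
  show monomial s 1 ∈ Ig1 k
  simp only [monomialExps, Finset.coe_insert, Finset.coe_singleton, Set.mem_insert_iff,
    Set.mem_singleton_iff] at hs
  rcases hs with rfl | rfl | rfl | rfl | rfl | rfl | rfl | rfl <;>
    rw [← pow_mul_pow_mul_pow_eq_monomial]
  · convert comb 1 0 0 0 0 using 1; ring
  · convert comb 0 1 0 0 0 using 1; ring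
  · convert comb 0 0 1 0 0 using 1; ring
  · convert comb 0 (yy k ^ 2) 0 (xx k) 0 using 1; ring
  · convert comb 0 0 (yy k ^ 2) (zz k) 0 using 1; ring
  · convert comb 0 (zz k ^ 2) 0 0 (-yy k) using 1; ring
  · convert comb (yy k ^ 2) 0 0 0 (xx k) using 1; ring
  · convert comb 0 0 (yy k ^ 3) 0 (zz k ^ 2) using 1; ring

theorem pow_mul_pow_mul_pow_mem {a b c : ℕ} (h : ∃ s ∈ monomialExps, s ≤ expo a b c) :
    xx k ^ a * yy k ^ b * zz k ^ c ∈ Ig1 k := by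
  obtain ⟨s, hs, hse⟩ := h
  rw [pow_mul_pow_mul_pow_eq_monomial, ← tsub_add_cancel_of_le hse, ← one_mul (1 : k),
    ← monomial_mul_monomial]
  exact Ideal.mul_mem_left _ _ (span_monomialExps_le (Ideal.subset_span ⟨s, hs, rfl⟩))

theorem mul_mem_of_mem_colon {f : MvPowerSeries (Fin 3) k}
    (hf : f ∈ (Ig1 k).colon {xx k, yy k, zz k}) :
    f * monomial (expo 1 0 0) 1 ∈ Ig1 k ∧ f * monomial (expo 0 1 0) 1 ∈ Ig1 k ∧
      f * monomial (expo 0 0 1) 1 ∈ Ig1 k := by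
  simpa [Submodule.mem_colon, xx_eq_monomial, yy_eq_monomial, zz_eq_monomial] using hf

theorem coeff_eq_zero_of_mem_colon_of_isStandard {f : MvPowerSeries (Fin 3) k}
    (hf : f ∈ (Ig1 k).colon {xx k, yy k, zz k}) {a b c : ℕ}
    (h : IsStandard (a + 1) b c ∨ IsStandard a (b + 1) c ∨ IsStandard a b (c + 1)) :
    coeff (expo a b c) f = 0 := by
  obtain ⟨hx, hy, hz⟩ := mul_mem_of_mem_colon hf
  rcases h with h | h | h
  · simpa [coeff_mul_monomial] using coeff_eq_zero_of_isStandard h hx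
  · simpa [coeff_mul_monomial] using coeff_eq_zero_of_isStandard h hy
  · simpa [coeff_mul_monomial] using coeff_eq_zero_of_isStandard h hz

def exceptionalExps : Finset (Fin 3 →₀ ℕ) :=
  {expo 4 1 0, expo 0 4 1, expo 1 0 4, expo 3 0 2, expo 4 0 0, expo 0 3 1, expo 1 0 3, expo 0 4 0}

theorem sum_exceptionalExps {M : Type*} [AddCommMonoid M] (F : (Fin 3 →₀ ℕ) → M) :
    ∑ t ∈ exceptionalExps, F t = F (expo 4 1 0) + (F (expo 0 4 1) + (F (expo 1 0 4) +
      (F (expo 3 0 2) + (F (expo 4 0 0) + (F (expo 0 3 1) + (F (expo 1 0 3) +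
        F (expo 0 4 0))))))) := by
  simp [exceptionalExps, Finset.sum_insert]

set_option synthInstance.maxSize 10000 in
theorem coeff_eq_zero_of_mem_colon {f : MvPowerSeries (Fin 3) k}
    (hf : f ∈ (Ig1 k).colon {xx k, yy k, zz k}) {a b c : ℕ}
    (hS : ∀ s ∈ monomialExps, ¬s ≤ expo a b c) (hT : expo a b c ∉ exceptionalExps) :
    coeff (expo a b c) f = 0 := by
  by_cases h : IsStandard (a + 1) b c ∨ IsStandard a (b + 1) c ∨ IsStandard a b (c + 1)
  · exact coeff_eq_zero_of_mem_colon_of_isStandard hf h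
  simp only [monomialExps, exceptionalExps, Finset.mem_insert, Finset.mem_singleton,
    forall_eq_or_imp, forall_eq, expo_le_expo, expo_inj] at hS hT
  obtain ⟨rfl, rfl⟩ | ⟨ha, hb, hc⟩ : (a = 0 ∧ b = 0) ∨ (a ≤ 4 ∧ b ≤ 4 ∧ c ≤ 4) := by
    clear h hT
    omega
  · exact coeff_eq_zero_of_mem_colon_of_isStandard hf
      (Or.inr (Or.inr (by unfold IsStandard; omega)))
  obtain ⟨hx, hy, hz⟩ := mul_mem_of_mem_colon hf
  -- A finite check leaves only `y²z`, `y³` and `x³y`, which need the inverse-system functionals.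
  interval_cases a <;> interval_cases b <;> interval_cases c <;>
    try (exfalso; revert h hS hT; decide)
  · simpa [coeff_mul_monomial] using coeff_x4_add_y3z_eq_zero hy
  · simpa [coeff_mul_monomial] using coeff_x4_add_y3z_eq_zero hz
  · have hz4 : coeff (expo 0 0 4) f = 0 :=
      coeff_eq_zero_of_mem_colon_of_isStandard hf (by decide)
    simpa [coeff_mul_monomial, hz4] using coeff_x4y_add_y4z_add_xz4_eq_zero hx

theorem coeff_x4_add_y3z_eq_zero_of_mem_colon {f : MvPowerSeries (Fin 3) k}
    (hf : f ∈ (Ig1 k).colon {xx k, yy k, zz k}) :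
    coeff (expo 4 0 0) f + coeff (expo 0 3 1) f = 0 := by
  simpa [coeff_mul_monomial] using
    coeff_x4y_add_y4z_add_xz4_eq_zero (mul_mem_of_mem_colon hf).2.1

theorem coeff_xz3_add_y4_eq_zero_of_mem_colon {f : MvPowerSeries (Fin 3) k}
    (hf : f ∈ (Ig1 k).colon {xx k, yy k, zz k}) :
    coeff (expo 1 0 3) f + coeff (expo 0 4 0) f = 0 := by
  simpa [coeff_mul_monomial, add_comm] using
    coeff_x4y_add_y4z_add_xz4_eq_zero (mul_mem_of_mem_colon hf).2.2

theorem sub_sum_exceptional_mem {f : MvPowerSeries (Fin 3) k}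
    (hf : f ∈ (Ig1 k).colon {xx k, yy k, zz k}) :
    f - ∑ t ∈ exceptionalExps, monomial t (coeff t f) ∈ Ig1 k := by
  refine span_monomialExps_le (mem_span_monomial_image _ fun e he => ?_)
  by_contra! hS
  rw [map_sub, coeff_sum_monomial_coeff] at he
  split_ifs at he with hT
  · simp at he
  · rw [eq_expo e] at hS hT he
    exact he (by simpa using coeff_eq_zero_of_mem_colon hf hS hT)

theorem sum_exceptional_mem_sup {f : MvPowerSeries (Fin 3) k}
    (hf : f ∈ (Ig1 k).colon {xx k, yy k, zz k}) :
    ∑ t ∈ exceptionalExps, monomial t (coeff t f) ∈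
      Ig1 k ⊔ Ideal.span {xx k ^ 4 * yy k, xx k ^ 3 * zz k ^ 2} := by
  have h1 := eq_neg_of_add_eq_zero_right (coeff_x4_add_y3z_eq_zero_of_mem_colon hf)
  have h2 := eq_neg_of_add_eq_zero_right (coeff_xz3_add_y4_eq_zero_of_mem_colon hf)
  refine Submodule.mem_sup.2 ⟨
    (C (coeff (expo 4 0 0) f) - (C (coeff (expo 0 4 1) f) + C (coeff (expo 1 0 4) f)) * yy k) *
        (xx k ^ 4 - yy k ^ 3 * zz k) +
      (C (coeff (expo 1 0 3) f) + C (coeff (expo 1 0 4) f) * zz k) * (xx k * zz k ^ 3 - yy k ^ 4),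
    add_mem (Ideal.mul_mem_left _ _ (Ideal.subset_span (by simp)))
      (Ideal.mul_mem_left _ _ (Ideal.subset_span (by simp))),
    C (coeff (expo 4 1 0) f + coeff (expo 0 4 1) f + coeff (expo 1 0 4) f) * (xx k ^ 4 * yy k) +
      C (coeff (expo 3 0 2) f) * (xx k ^ 3 * zz k ^ 2),
    Ideal.mem_span_pair.2 ⟨_, _, rfl⟩, ?_⟩
  rw [sum_exceptionalExps, h1, h2]
  simp only [monomial_expo_eq_C_mul, map_neg, map_add]
  ring

theorem span_socle_le_colon :
    Ideal.span {xx k ^ 4 * yy k, xx k ^ 3 * zz k ^ 2} ≤ (Ig1 k).colon {xx k, yy k, zz k} := by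
  simp only [Ideal.span_le, Set.insert_subset_iff, Set.singleton_subset_iff, SetLike.mem_coe,
    Submodule.mem_colon, Set.mem_insert_iff, Set.mem_singleton_iff, forall_eq_or_imp, forall_eq,
    smul_eq_mul]
  refine ⟨⟨?_, ?_, ?_⟩, ?_, ?_, ?_⟩
  · convert pow_mul_pow_mul_pow_mem (a := 5) (b := 1) (c := 0) (by simp [monomialExps]) using 1
    ring
  · convert pow_mul_pow_mul_pow_mem (a := 4) (b := 2) (c := 0) (by simp [monomialExps]) using 1
    ring
  · convert pow_mul_pow_mul_pow_mem (a := 4) (b := 1) (c := 1) (by simp [monomialExps]) using 1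
    ring
  · convert pow_mul_pow_mul_pow_mem (a := 4) (b := 0) (c := 2) (by simp [monomialExps]) using 1
    ring
  · convert pow_mul_pow_mul_pow_mem (a := 3) (b := 1) (c := 2) (by simp [monomialExps]) using 1
    ring
  · convert pow_mul_pow_mul_pow_mem (a := 3) (b := 0) (c := 3) (by simp [monomialExps]) using 1
    ring

theorem colon_eq : (Ig1 k).colon {xx k, yy k, zz k} =
    Ig1 k ⊔ Ideal.span {xx k ^ 4 * yy k, xx k ^ 3 * zz k ^ 2} := by
  refine le_antisymm (fun f hf => ?_) (sup_le Ideal.le_colon span_socle_le_colon)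
  rw [← sub_add_cancel f (∑ t ∈ exceptionalExps, monomial t (coeff t f))]
  exact add_mem (Ideal.mem_sup_left (sub_sum_exceptional_mem hf)) (sum_exceptional_mem_sup hf)

theorem mk_mul_eq_smul_of_mem_colon {A : MvPowerSeries (Fin 3) k}
    (hA : A ∈ (Ig1 k).colon {xx k, yy k, zz k}) (r : MvPowerSeries (Fin 3) k) :
    Ideal.Quotient.mk (Ig1 k) r * Ideal.Quotient.mk (Ig1 k) A =
      constantCoeff r • Ideal.Quotient.mk (Ig1 k) A := by
  have hr : r - C (constantCoeff r) ∈ Ideal.span {xx k, yy k, zz k} := by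
    refine Ideal.span_mono ?_ (sub_C_constantCoeff_mem_span_X r)
    rintro _ ⟨i, rfl⟩
    fin_cases i <;> simp [xx, yy, zz]
  rw [← Ideal.colon_span, Submodule.mem_colon] at hA
  rw [smul_mk_eq_mk_C_mul, ← map_mul, Ideal.Quotient.eq, ← sub_mul, mul_comm]
  exact hA _ hr

theorem linearIndependent_socle : LinearIndependent k
    ![Ideal.Quotient.mk (Ig1 k) (xx k ^ 4 * yy k),
      Ideal.Quotient.mk (Ig1 k) (xx k ^ 3 * zz k ^ 2)] := by
  refine LinearIndependent.pair_iff.2 fun s t hst => ?_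
  rw [smul_mk_eq_mk_C_mul, smul_mk_eq_mk_C_mul, ← map_add, Ideal.Quotient.eq_zero_iff_mem] at hst
  have h : monomial (expo 4 1 0) s + monomial (expo 3 0 2) t ∈ Ig1 k := by
    convert hst using 1
    rw [monomial_expo_eq_C_mul, monomial_expo_eq_C_mul]
    ring
  exact ⟨by simpa [coeff_monomial] using coeff_x4y_add_y4z_add_xz4_eq_zero h,
    by simpa [coeff_monomial] using
      coeff_eq_zero_of_isStandard (a := 3) (b := 0) (c := 2) (by decide) h⟩

end Ig1

/-- The socle `(0 :_R m)` of `R = Q/g1`. -/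
theorem socle_g1 (k : Type*) [Field k] :
    (⊥ : Ideal (MvPowerSeries (Fin 3) k ⧸ Ig1 k)).colon
        (Ideal.map (Ideal.Quotient.mk (Ig1 k)) (Ideal.span {xx k, yy k, zz k}))
      = Ideal.span {Ideal.Quotient.mk (Ig1 k) (xx k ^ 4 * yy k), Ideal.Quotient.mk (Ig1 k) (xx k ^ 3 * zz k ^ 2)} ∧
    Module.finrank k (Submodule.restrictScalars k
      ((⊥ : Ideal (MvPowerSeries (Fin 3) k ⧸ Ig1 k)).colon
        (Ideal.map (Ideal.Quotient.mk (Ig1 k)) (Ideal.span {xx k, yy k, zz k})))) = 2 := by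
  have hsocle : (⊥ : Ideal (MvPowerSeries (Fin 3) k ⧸ Ig1 k)).colon
      (Ideal.map (Ideal.Quotient.mk (Ig1 k)) (Ideal.span {xx k, yy k, zz k})) =
      Ideal.span {Ideal.Quotient.mk (Ig1 k) (xx k ^ 4 * yy k),
        Ideal.Quotient.mk (Ig1 k) (xx k ^ 3 * zz k ^ 2)} := by
    rw [Ideal.Quotient.bot_colon_map_mk, Ideal.colon_span, Ig1.colon_eq, Ideal.map_sup,
      Ideal.map_quotient_self, bot_sup_eq, Ideal.map_span, Set.image_pair]
  have hscalar : ∀ r, ∀ a ∈ ({Ideal.Quotient.mk (Ig1 k) (xx k ^ 4 * yy k),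
      Ideal.Quotient.mk (Ig1 k) (xx k ^ 3 * zz k ^ 2)} : Set (MvPowerSeries (Fin 3) k ⧸ Ig1 k)),
      ∃ c : k, r * a = c • a := by
    rintro r _ (rfl | rfl) <;> obtain ⟨r, rfl⟩ := Ideal.Quotient.mk_surjective r <;>
      exact ⟨_, Ig1.mk_mul_eq_smul_of_mem_colon (Ig1.span_socle_le_colon
        (Ideal.subset_span (by simp))) r⟩
  refine ⟨hsocle, ?_⟩
  rw [hsocle, Ideal.restrictScalars_span_eq_span_of_mul_eq_smul hscalar,
    ← Matrix.range_cons_cons_empty _ _ ![], finrank_span_eq_card Ig1.linearIndependent_socle,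
    Fintype.card_fin]
end
end

section
/- The ideal 𝔤₃ = (xy², xyz, yz², x⁴ − y³z, xz³ − y⁴, x³y − z⁴, x²z²) of Q is minimally generated by 7 elements; equivalently, the k-vector space 𝔤₃/(𝔪_Q·𝔤₃) has dimension 7. -/
/-!
Each generator `gᵢ` of `𝔤₃` has a leading monomial — `xy², xyz, yz², x⁴, xz³, x³y, x²z²` — that
occurs in `gᵢ` with coefficient `1`, occurs in no other generator, and is divisible by no monomial
of any product `x·gᵢ, y·gᵢ, z·gᵢ`. The coefficient of a monomial `x^m` vanishes on the ideal of
series with no term dividing `x^m`, which contains `𝔪·𝔤₃`; so reading off the seven leading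
coefficients is a linear map on `Q/𝔪𝔤₃` sending the classes of the generators to the standard basis
of `k⁷`. Those classes also span `𝔤₃/𝔪𝔤₃`, because `Q = k + 𝔪`.
-/

noncomputable section

/-- The ideal `g3` of the paper. -/
def Ig3 (k : Type*) [Field k] : Ideal (MvPowerSeries (Fin 3) k) :=
  Ideal.span {xx k * yy k ^ 2, xx k * yy k * zz k, yy k * zz k ^ 2, xx k ^ 4 - yy k ^ 3 * zz k, xx k * zz k ^ 3 - yy k ^ 4, xx k ^ 3 * yy k - zz k ^ 4, xx k ^ 2 * zz k ^ 2}

open MvPowerSeries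

namespace MvPowerSeries

variable {σ R : Type*}

def vanishingOnIic [Semiring R] (m : σ →₀ ℕ) : Ideal (MvPowerSeries σ R) where
  carrier := {f | ∀ n ≤ m, coeff n f = 0}
  add_mem' hf hg n hn := by simp [hf n hn, hg n hn]
  zero_mem' n _ := by simp
  smul_mem' a f hf n hn := by
    classical
    rw [smul_eq_mul, coeff_mul]
    refine Finset.sum_eq_zero fun p hp => ?_
    have hp2 : p.2 ≤ n := Finset.HasAntidiagonal.mem_antidiagonal.mp hp ▸ le_add_self
    rw [hf p.2 (hp2.trans hn), mul_zero]

theorem monomial_mem_vanishingOnIic [Semiring R] {e m : σ →₀ ℕ} (h : ¬e ≤ m) (r : R) :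
    monomial e r ∈ vanishingOnIic m := by
  classical
  intro n hn
  rw [coeff_monomial, if_neg]
  rintro rfl
  exact h hn

theorem mem_span_range_X_of_constantCoeff_eq_zero [CommSemiring R] [Finite σ]
    {f : MvPowerSeries σ R} (hf : constantCoeff f = 0) : f ∈ Ideal.span (Set.range X) := by
  classical
  cases nonempty_fintype σ
  have : ∀ n : σ →₀ ℕ, ∃ o : Option σ, (∀ i ∈ o, n i ≠ 0) ∧ (o = none → n = 0) := by
    intro n
    by_cases hn : n = 0
    · exact ⟨none, by simp, fun _ => hn⟩
    · obtain ⟨i, hi⟩ := Finsupp.ne_iff.mp hn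
      exact ⟨some i, by simpa using hi, by simp⟩
  -- Charge each nonconstant monomial to a variable dividing it, and split `f` accordingly.
  choose var hvar hnone using this
  let part (i : σ) : MvPowerSeries σ R := fun n => if var n = some i then coeff n f else 0
  have coeff_part (i : σ) (n : σ →₀ ℕ) :
      coeff n (part i) = if var n = some i then coeff n f else 0 := rfl
  have hsum : f = ∑ i, part i := by
    ext n
    simp only [map_sum, coeff_part]
    cases h : var n with
    | none => simp [hnone n h, hf]
    | some i => simp
  rw [hsum]
  refine Ideal.sum_mem _ fun i _ => ?_
  obtain ⟨q, hq⟩ : X i ∣ part i :=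
    X_dvd_iff.mpr fun n hn => by
      rw [coeff_part, if_neg (show var n ≠ some i from fun h => hvar n i h hn)]
  rw [hq]
  exact Ideal.mul_mem_right _ _ (Ideal.subset_span ⟨i, rfl⟩)

end MvPowerSeries

theorem Ideal.map_mkQ_span_eq_span_image {k A : Type*} [CommRing k] [CommRing A] [Algebra k A]
    {J : Ideal A} (hJ : ∀ a : A, ∃ c : k, a - algebraMap k A c ∈ J) (s : Set A) :
    ((span s).restrictScalars k).map ((J * span s).restrictScalars k).mkQ =
      Submodule.span k (((J * span s).restrictScalars k).mkQ '' s) := by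
  refine le_antisymm (Submodule.map_le_iff_le_comap.mpr fun z hz => ?_)
    (Submodule.span_le.mpr ?_)
  · change z ∈ span s at hz
    induction hz using Submodule.span_induction with
    | mem z hz => exact Submodule.subset_span ⟨z, hz, rfl⟩
    | zero => exact Submodule.zero_mem _
    | add _ _ _ _ hx hy => exact Submodule.add_mem _ hx hy
    | smul a z hz ih =>
      obtain ⟨c, hc⟩ := hJ a
      -- modulo `J * span s`, the scalar `a` acts on `z ∈ span s` as its residue `c`
      have hres : ((J * span s).restrictScalars k).mkQ (a • z) =
          c • ((J * span s).restrictScalars k).mkQ z := by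
        rw [← map_smul, Submodule.mkQ_apply, Submodule.mkQ_apply, Submodule.Quotient.eq,
          Algebra.smul_def c z, smul_eq_mul, ← sub_mul]
        exact mul_mem_mul hc hz
      rw [Submodule.mem_comap, hres]
      exact Submodule.smul_mem _ _ ih
  · rintro _ ⟨z, hz, rfl⟩
    exact ⟨z, subset_span hz, rfl⟩

namespace Ig3

variable (k : Type*) [Field k]

def mon (a : Fin 3 → ℕ) : MvPowerSeries (Fin 3) k :=
  monomial (Finsupp.equivFunOnFinite.symm a) 1

theorem mon_eq (a b c : ℕ) : mon k ![a, b, c] = xx k ^ a * yy k ^ b * zz k ^ c := by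
  rw [mon, xx, yy, zz, X_pow_eq, X_pow_eq, X_pow_eq, monomial_mul_monomial,
    monomial_mul_monomial, one_mul, one_mul]
  congr 2
  ext i
  fin_cases i <;> simp

theorem mon_mul (a b : Fin 3 → ℕ) : mon k a * mon k b = mon k (a + b) := by
  rw [mon, mon, mon, monomial_mul_monomial, one_mul]
  congr 2
  ext i
  simp

theorem X_eq_mon (i : Fin 3) : X i = mon k (Pi.single i 1) := by
  rw [X_def, mon, Finsupp.equivFunOnFinite_symm_single]

theorem coeff_mon (a b : Fin 3 → ℕ) :
    coeff (Finsupp.equivFunOnFinite.symm a) (mon k b) = if a = b then 1 else 0 := by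
  classical
  simp only [mon, coeff_monomial, Equiv.apply_eq_iff_eq]

def gens : Fin 7 → MvPowerSeries (Fin 3) k :=
  ![mon k ![1, 2, 0], mon k ![1, 1, 1], mon k ![0, 1, 2], mon k ![4, 0, 0] - mon k ![0, 3, 1],
    mon k ![1, 0, 3] - mon k ![0, 4, 0], mon k ![3, 1, 0] - mon k ![0, 0, 4], mon k ![2, 0, 2]]

def lead : Fin 7 → Fin 3 → ℕ :=
  ![![1, 2, 0], ![1, 1, 1], ![0, 1, 2], ![4, 0, 0], ![1, 0, 3], ![3, 1, 0], ![2, 0, 2]]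

theorem eq_span_range_gens : Ig3 k = Ideal.span (Set.range (gens k)) := by
  simp only [Ig3, gens, mon_eq, Matrix.range_cons, Matrix.range_empty, Set.union_empty,
    Set.singleton_union, pow_zero, pow_one, mul_one, one_mul]

theorem span_xx_yy_zz_eq : Ideal.span {xx k, yy k, zz k} = Ideal.span (Set.range X) := by
  congr 1
  ext f
  simp [xx, yy, zz, Fin.exists_fin_succ, eq_comm]

theorem coeff_lead_gens (i j : Fin 7) :
    coeff (Finsupp.equivFunOnFinite.symm (lead j)) (gens k i) =
      (Pi.single i 1 : Fin 7 → k) j := by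
  fin_cases i <;> fin_cases j <;> simp [gens, lead, coeff_mon]

theorem mon_mem_iInf_vanishingOnIic {e : Fin 3 → ℕ} (h : ∀ j, ∃ l, lead j l < e l) :
    mon k e ∈ ⨅ j, vanishingOnIic (Finsupp.equivFunOnFinite.symm (lead j)) := by
  refine Ideal.mem_iInf.mpr fun j => monomial_mem_vanishingOnIic (fun hle => ?_) 1
  obtain ⟨l, hl⟩ := h j
  exact (hl.trans_le (hle l)).false

theorem X_mul_gens_mem (v : Fin 3) (i : Fin 7) :
    X v * gens k i ∈ ⨅ j, vanishingOnIic (Finsupp.equivFunOnFinite.symm (lead j)) := by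
  fin_cases v <;> fin_cases i <;>
    simp only [Fin.zero_eta, Fin.mk_one, Fin.isValue, Fin.reduceFinMk, gens, Matrix.cons_val,
      Matrix.cons_val_zero, Matrix.cons_val_one, X_eq_mon, mul_sub, mon_mul] <;>
    first
    | exact sub_mem (mon_mem_iInf_vanishingOnIic k (by decide))
        (mon_mem_iInf_vanishingOnIic k (by decide))
    | exact mon_mem_iInf_vanishingOnIic k (by decide)

theorem span_range_X_mul_le_iInf_vanishingOnIic :
    Ideal.span (Set.range X) * Ideal.span (Set.range (gens k)) ≤
      ⨅ j, vanishingOnIic (Finsupp.equivFunOnFinite.symm (lead j)) := by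
  rw [Ideal.span_mul_span, Ideal.span_le]
  rintro _ ⟨_, ⟨v, rfl⟩, _, ⟨i, rfl⟩, rfl⟩
  exact X_mul_gens_mem k v i

theorem linearIndependent_mkQ_gens :
    LinearIndependent k
      (((Ideal.span (Set.range X) * Ideal.span (Set.range (gens k))).restrictScalars k).mkQ ∘
        gens k) := by
  let Φ : MvPowerSeries (Fin 3) k →ₗ[k] Fin 7 → k :=
    LinearMap.pi fun j => coeff (Finsupp.equivFunOnFinite.symm (lead j))
  have hker : (Ideal.span (Set.range X) * Ideal.span (Set.range (gens k))).restrictScalars k ≤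
      LinearMap.ker Φ := fun f hf => by
    ext j
    exact Ideal.mem_iInf.mp (span_range_X_mul_le_iInf_vanishingOnIic k hf) j _ le_rfl
  have hΦ : Φ ∘ gens k = fun i => Pi.single i 1 := by
    ext i j
    exact coeff_lead_gens k i j
  exact LinearIndependent.of_comp (Submodule.liftQ _ Φ hker)
    (hΦ ▸ Pi.linearIndependent_single_one (Fin 7) k)

end Ig3

theorem mu_g3 (k : Type*) [Field k] :
    Module.finrank k
      (Submodule.map
        (Submodule.restrictScalars k (Ideal.span {xx k, yy k, zz k} * Ig3 k)).mkQ
        (Submodule.restrictScalars k (Ig3 k))) = 7 := by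
  have residue (f : MvPowerSeries (Fin 3) k) :
      ∃ c : k, f - algebraMap k _ c ∈ Ideal.span (Set.range X) :=
    ⟨constantCoeff f, mem_span_range_X_of_constantCoeff_eq_zero (by simp [← c_eq_algebraMap])⟩
  rw [Ig3.eq_span_range_gens, Ig3.span_xx_yy_zz_eq, Ideal.map_mkQ_span_eq_span_image residue,
    ← Set.range_comp, finrank_span_eq_card (Ig3.linearIndependent_mkQ_gens k), Fintype.card_fin]
end
end

section
/- Let 𝔤₂ = (xy², xyz, yz², x⁴ − y³z, xz³ − y⁴, x³y − z⁴) ⊆ Q. Then the quotient ring R = Q/𝔤₂ is a finite-dimensional k-vector space of dimension 24; more precisely, the images of the 24 monomials 1; x, y, z; x², xy, xz, y², yz, z²; x³, x²y, x²z, xz², y³, y²z, z³; x⁴, x³y, x³z, x²z², xz³; x⁴y, x³z² form a k-basis of R. -/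
/-!
STATEMENT 16: The quotient ring `R = Q/g2` is a finite-dimensional `k`-vector
space of dimension 24; the images of the 24 listed monomials form a `k`-basis of
`R`, i.e. they are linearly independent over `k` and span `R`.

Here `Q = k[[x,y,z]]` is formalized as `MvPowerSeries (Fin 3) k` with
`x = X 0`, `y = X 1`, `z = X 2`.
-/

noncomputable section

/-- The ideal `g2` of the paper. -/
def Ig2 (k : Type*) [Field k] : Ideal (MvPowerSeries (Fin 3) k) :=
  Ideal.span {xx k * yy k ^ 2, xx k * yy k * zz k, yy k * zz k ^ 2, xx k ^ 4 - yy k ^ 3 * zz k, xx k * zz k ^ 3 - yy k ^ 4, xx k ^ 3 * yy k - zz k ^ 4}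

/-- The family of images in `R = Q/g2` of the 24 listed monomials. -/
def mons_g2 (k : Type*) [Field k] : Fin 24 → (MvPowerSeries (Fin 3) k ⧸ Ig2 k) :=
  ![Ideal.Quotient.mk (Ig2 k) (1),
    Ideal.Quotient.mk (Ig2 k) (xx k),
    Ideal.Quotient.mk (Ig2 k) (yy k),
    Ideal.Quotient.mk (Ig2 k) (zz k),
    Ideal.Quotient.mk (Ig2 k) (xx k ^ 2),
    Ideal.Quotient.mk (Ig2 k) (xx k * yy k),
    Ideal.Quotient.mk (Ig2 k) (xx k * zz k),
    Ideal.Quotient.mk (Ig2 k) (yy k ^ 2),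
    Ideal.Quotient.mk (Ig2 k) (yy k * zz k),
    Ideal.Quotient.mk (Ig2 k) (zz k ^ 2),
    Ideal.Quotient.mk (Ig2 k) (xx k ^ 3),
    Ideal.Quotient.mk (Ig2 k) (xx k ^ 2 * yy k),
    Ideal.Quotient.mk (Ig2 k) (xx k ^ 2 * zz k),
    Ideal.Quotient.mk (Ig2 k) (xx k * zz k ^ 2),
    Ideal.Quotient.mk (Ig2 k) (yy k ^ 3),
    Ideal.Quotient.mk (Ig2 k) (yy k ^ 2 * zz k),
    Ideal.Quotient.mk (Ig2 k) (zz k ^ 3),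
    Ideal.Quotient.mk (Ig2 k) (xx k ^ 4),
    Ideal.Quotient.mk (Ig2 k) (xx k ^ 3 * yy k),
    Ideal.Quotient.mk (Ig2 k) (xx k ^ 3 * zz k),
    Ideal.Quotient.mk (Ig2 k) (xx k ^ 2 * zz k ^ 2),
    Ideal.Quotient.mk (Ig2 k) (xx k * zz k ^ 3),
    Ideal.Quotient.mk (Ig2 k) (xx k ^ 4 * yy k),
    Ideal.Quotient.mk (Ig2 k) (xx k ^ 3 * zz k ^ 2)]

/-!
The six generators of `g₂` together with `x⁵`, `x⁴z` and `x²z³`, which lie in `g₂`, form a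
Gröbner basis for the weight order with weights `(1, 2, 2)`, and the 24 listed monomials are
exactly the monomials divisible by none of its leading monomials. Reducing along it, every
monomial is congruent to a listed monomial or to `0`; in particular all monomials of degree 6 lie
in `g₂`, so a power series is congruent to its truncation below degree 6, and the listed monomials
span. For independence, send a power series to the vector whose `i`-th entry is the sum of its
coefficients over the monomials of degree `≤ 5` reducing to the `i`-th listed monomial; since the
reduction table is compatible with multiplication by the leading monomials, this linear map
kills `g₂`, and it sends the `i`-th listed monomial to the `i`-th unit vector.
-/

open MvPowerSeries

theorem MvPowerSeries.mem_ideal_of_coeff_eq_zero {σ R : Type*} [Finite σ] [CommSemiring R]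
    {I : Ideal (MvPowerSeries σ R)} {n : ℕ} (hI : ∀ d : σ →₀ ℕ, d.degree = n → monomial d 1 ∈ I)
    {f : MvPowerSeries σ R} (hf : ∀ d : σ →₀ ℕ, d.degree < n → coeff d f = 0) : f ∈ I := by
  classical
  have hpick : ∀ d : σ →₀ ℕ, ∃ e ≤ d, n ≤ d.degree → e.degree = n := fun d ↦
    if h : n ≤ d.degree then (d.exists_le_degree_eq n h).imp fun _ he ↦ ⟨he.1, fun _ ↦ he.2⟩
    else ⟨d, le_rfl, fun h' ↦ absurd h' h⟩
  choose p hp_le hp_deg using hpick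
  -- the coefficient of `f` at `d` is carried by the summand of the degree-`n` divisor `p d`
  let g (e : σ →₀ ℕ) : MvPowerSeries σ R := fun u ↦ if p (u + e) = e then coeff (u + e) f else 0
  have hg (e u : σ →₀ ℕ) : coeff u (g e) = if p (u + e) = e then coeff (u + e) f else 0 := rfl
  have hfg : f = ∑ e ∈ (Finsupp.finite_of_degree_eq n).toFinset, monomial e 1 * g e := by
    ext d
    simp only [map_sum, coeff_monomial_mul, one_mul, hg]
    by_cases hd : n ≤ d.degree
    · rw [Finset.sum_eq_single (p d)]
      · simp [hp_le d, tsub_add_cancel_of_le (hp_le d)]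
      · intro e _ he
        split_ifs with hed h
        · rw [tsub_add_cancel_of_le hed] at h
          exact absurd h.symm he
        all_goals rfl
      · simp [hp_deg d hd]
    · rw [hf d (not_le.mp hd), Finset.sum_eq_zero]
      intro e he
      rw [if_neg]
      intro hed
      simp only [Set.Finite.mem_toFinset, Set.mem_ofPred_eq] at he
      exact hd (he ▸ Finsupp.degree_mono hed)
  rw [hfg]
  exact Ideal.sum_mem _ fun e he ↦ Ideal.mul_mem_right _ _ (hI e (by simpa using he))

theorem MvPowerSeries.sub_truncTotal_mem {σ R : Type*} [Finite σ] [CommRing R]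
    {I : Ideal (MvPowerSeries σ R)} {n : ℕ} (hI : ∀ d : σ →₀ ℕ, d.degree = n → monomial d 1 ∈ I)
    (f : MvPowerSeries σ R) : f - (truncTotal n f : MvPowerSeries σ R) ∈ I := by
  refine mem_ideal_of_coeff_eq_zero hI fun d hd ↦ ?_
  rw [map_sub, MvPolynomial.coeff_coe, coeff_truncTotal _ hd, sub_self]

theorem MvPowerSeries.sum_coeff_mul_monomial_smul {σ R M : Type*} [CommSemiring R]
    [AddCommMonoid M] [Module R M] {F : Finset (σ →₀ ℕ)} (hF : ∀ e ∈ F, ∀ d ≤ e, d ∈ F)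
    {c : (σ →₀ ℕ) → M} (hc : ∀ e ∉ F, c e = 0) (q : MvPowerSeries σ R) (s : σ →₀ ℕ) :
    ∑ e ∈ F, coeff e (q * monomial s 1) • c e = ∑ u ∈ F, coeff u q • c (u + s) := by
  classical
  calc ∑ e ∈ F, coeff e (q * monomial s 1) • c e
      = ∑ e ∈ F with s ≤ e, coeff (e - s) q • c e := by
        rw [Finset.sum_filter]
        refine Finset.sum_congr rfl fun e _ ↦ ?_
        rw [coeff_mul_monomial, mul_one]
        split_ifs <;> simp
    _ = ∑ u ∈ F with u + s ∈ F, coeff u q • c (u + s) :=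
        Finset.sum_nbij' (· - s) (· + s)
          (fun e he ↦ by
            simp only [Finset.mem_filter] at he ⊢
            exact ⟨hF e he.1 _ tsub_le_self, by rw [tsub_add_cancel_of_le he.2]; exact he.1⟩)
          (by simp_all) (by simp_all [tsub_add_cancel_of_le]) (by simp)
          (by simp_all [tsub_add_cancel_of_le])
    _ = ∑ u ∈ F, coeff u q • c (u + s) := by
        rw [Finset.sum_filter]
        refine Finset.sum_congr rfl fun u _ ↦ ?_
        split_ifs with h
        · rfl
        · rw [hc _ h, smul_zero]

theorem Ideal.map_eq_zero_of_mem_span {A M F : Type*} [CommSemiring A] [AddCommMonoid M]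
    [FunLike F A M] [AddMonoidHomClass F A M] (φ : F) {G : Set A}
    (hG : ∀ g ∈ G, ∀ q, φ (q * g) = 0) {f : A} (hf : f ∈ Ideal.span G) : φ f = 0 := by
  suffices ∀ q, φ (q * f) = 0 by simpa using this 1
  induction hf using Submodule.span_induction with
  | mem g hg => exact hG g hg
  | zero => simp
  | add x y _ _ hx hy => intro q; rw [mul_add, map_add, hx, hy, add_zero]
  | smul a x _ hx => intro q; rw [smul_eq_mul, ← mul_assoc]; exact hx _

namespace G2

-- An exponent `(a, b, c)` stands for the monomial `xᵃ yᵇ zᶜ`.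

def deg (e : ℕ × ℕ × ℕ) : ℕ := e.1 + e.2.1 + e.2.2

def weight (e : ℕ × ℕ × ℕ) : ℕ := e.1 + 2 * e.2.1 + 2 * e.2.2

instance (e f : ℕ × ℕ × ℕ) : Decidable (e ≤ f) :=
  decidable_of_iff (e.1 ≤ f.1 ∧ e.2.1 ≤ f.2.1 ∧ e.2.2 ≤ f.2.2) (by simp [Prod.le_def])

def basisExp : Fin 24 → ℕ × ℕ × ℕ :=
  ![(0,0,0), (1,0,0), (0,1,0), (0,0,1), (2,0,0), (1,1,0), (1,0,1), (0,2,0), (0,1,1), (0,0,2),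
    (3,0,0), (2,1,0), (2,0,1), (1,0,2), (0,3,0), (0,2,1), (0,0,3), (4,0,0), (3,1,0), (3,0,1),
    (2,0,2), (1,0,3), (4,1,0), (3,0,2)]

/-- The reduced Gröbner basis of `g₂`: `(s, some t)` is the rule `xˢ ↦ xᵗ` and `(s, none)` the
rule `xˢ ↦ 0`. The last three lie in `g₂` since `x⁵ = x (x⁴ - y³z) + y² · xyz`,
`x⁴z = z (x⁴ - y³z) + y² · yz²` and `x²z³ = x (xz³ - y⁴) + y² · xy²`. -/
def rules : List ((ℕ × ℕ × ℕ) × Option (ℕ × ℕ × ℕ)) :=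
  [((1,2,0), none), ((1,1,1), none), ((0,1,2), none),
   ((0,3,1), some (4,0,0)), ((0,4,0), some (1,0,3)), ((0,0,4), some (3,1,0)),
   ((5,0,0), none), ((4,0,1), none), ((2,0,3), none)]

/-- The index of the listed monomial a monomial reduces to, `none` if it reduces to `0`. -/
def normalForm : ℕ × ℕ × ℕ → Option (Fin 24)
  | (0,3,1) => some 17
  | (0,0,4) => some 18
  | (0,4,0) => some 21
  | (1,0,4) => some 22
  | (0,4,1) => some 22
  | e => (List.finRange 24).find? (basisExp · = e)

theorem normalForm_basisExp : ∀ i, normalForm (basisExp i) = some i := by decide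

theorem normalForm_eq_none_of_five_lt_deg {e : ℕ × ℕ × ℕ} (he : 5 < deg e) :
    normalForm e = none := by
  have hbasis : ∀ i, deg (basisExp i) ≤ 5 := by decide
  unfold normalForm
  split
  any_goals simp [deg] at he
  refine List.find?_eq_none.2 fun i _ hi ↦ ?_
  rw [decide_eq_true_eq] at hi
  exact absurd (hi ▸ hbasis i) (not_le.2 he)

theorem exists_basisExp_or_lhs_le (e : ℕ × ℕ × ℕ) :
    (∃ i, basisExp i = e) ∨ ∃ r ∈ rules, r.1 ≤ e := by
  obtain ⟨a, b, c⟩ := e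
  by_cases h : a < 5 ∧ b < 4 ∧ c < 4
  · have box : ∀ a < 5, ∀ b < 4, ∀ c < 4,
        (∃ i, basisExp i = (a, b, c)) ∨ ∃ r ∈ rules, r.1 ≤ (a, b, c) := by decide
    exact box a h.1 b h.2.1 c h.2.2
  · right
    simp only [not_and_or, not_lt] at h
    rcases h with h | h | h
    · exact ⟨((5,0,0), none), by simp [rules], by simp [Prod.le_def, h]⟩
    · exact ⟨((0,4,0), some (1,0,3)), by simp [rules], by simp [Prod.le_def, h]⟩
    · exact ⟨((0,0,4), some (3,1,0)), by simp [rules], by simp [Prod.le_def, h]⟩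

theorem rules_homogeneous : ∀ r ∈ rules, 3 ≤ deg r.1 ∧ ∀ t ∈ r.2, deg t = deg r.1 := by decide

theorem rules_weight_lt : ∀ r ∈ rules, ∀ t ∈ r.2, weight t < weight r.1 := by decide

theorem normalForm_add_lhs {r} (hr : r ∈ rules) (v : ℕ × ℕ × ℕ) :
    normalForm (v + r.1) = r.2.bind fun t ↦ normalForm (v + t) := by
  obtain ⟨a, b, c⟩ := v
  by_cases h : a < 3 ∧ b < 3 ∧ c < 3
  · have box : ∀ r ∈ rules, ∀ a < 3, ∀ b < 3, ∀ c < 3,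
        normalForm ((a, b, c) + r.1) = r.2.bind fun t ↦ normalForm ((a, b, c) + t) := by decide
    exact box r hr a h.1 b h.2.1 c h.2.2
  · have hdeg : 5 < deg ((a, b, c) + r.1) := by
      have := (rules_homogeneous r hr).1
      simp only [deg, Prod.fst_add, Prod.snd_add] at this ⊢
      omega
    rw [normalForm_eq_none_of_five_lt_deg hdeg]
    cases ht : r.2 with
    | none => rfl
    | some t =>
      have := (rules_homogeneous r hr).2 t ht
      simp only [Option.bind_some]
      refine (normalForm_eq_none_of_five_lt_deg ?_).symm
      simp only [deg, Prod.fst_add, Prod.snd_add] at this hdeg ⊢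
      omega

variable (k : Type*) [Field k]

def mono (e : ℕ × ℕ × ℕ) : MvPowerSeries (Fin 3) k := xx k ^ e.1 * yy k ^ e.2.1 * zz k ^ e.2.2

theorem mono_add (e f : ℕ × ℕ × ℕ) : mono k (e + f) = mono k e * mono k f := by
  simp only [mono, Prod.fst_add, Prod.snd_add, pow_add]
  ring

theorem mons_g2_eq_mk_mono (i : Fin 24) :
    mons_g2 k i = Ideal.Quotient.mk (Ig2 k) (mono k (basisExp i)) := by
  fin_cases i <;> simp [mons_g2, basisExp, mono]

theorem mk_mono_lhs {r} (hr : r ∈ rules) :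
    Ideal.Quotient.mk (Ig2 k) (mono k r.1) =
      r.2.elim 0 fun t ↦ Ideal.Quotient.mk (Ig2 k) (mono k t) := by
  have gens : ∀ g ∈ _, Ideal.Quotient.mk (Ig2 k) g = 0 := fun g hg ↦
    Ideal.Quotient.eq_zero_iff_mem.2 (Ideal.subset_span hg)
  simp only [Set.mem_insert_iff, Set.mem_singleton_iff, forall_eq_or_imp, forall_eq, map_mul,
    map_pow, map_sub, sub_eq_zero] at gens
  simp only [rules, List.mem_cons, List.not_mem_nil, or_false] at hr
  rcases hr with rfl | rfl | rfl | rfl | rfl | rfl | rfl | rfl | rfl <;>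
    simp only [mono, map_mul, map_pow, Option.elim] <;> grind

theorem mk_mono (e : ℕ × ℕ × ℕ) :
    Ideal.Quotient.mk (Ig2 k) (mono k e) = (normalForm e).elim 0 (mons_g2 k) := by
  rcases exists_basisExp_or_lhs_le e with ⟨i, rfl⟩ | ⟨r, hr, hle⟩
  · rw [normalForm_basisExp, Option.elim_some, mons_g2_eq_mk_mono]
  · obtain ⟨v, hv⟩ : ∃ v, e = v + r.1 := ⟨e - r.1, (tsub_add_cancel_of_le hle).symm⟩
    rw [hv, normalForm_add_lhs hr, mono_add, map_mul, mk_mono_lhs k hr]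
    rcases r with ⟨s, _ | t⟩
    · simp
    · have : weight (v + t) < weight e := by
        have := rules_weight_lt _ hr t rfl
        simp only [hv, weight, Prod.fst_add, Prod.snd_add] at this ⊢
        omega
      simp only [Option.elim_some, Option.bind_some, ← map_mul, ← mono_add]
      exact mk_mono (v + t)
termination_by weight e

def toFinsupp (e : ℕ × ℕ × ℕ) : Fin 3 →₀ ℕ :=
  Finsupp.single 0 e.1 + Finsupp.single 1 e.2.1 + Finsupp.single 2 e.2.2

def ofFinsupp (d : Fin 3 →₀ ℕ) : ℕ × ℕ × ℕ := (d 0, d 1, d 2)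

theorem mono_eq_monomial (e : ℕ × ℕ × ℕ) : mono k e = monomial (toFinsupp e) 1 := by
  simp [mono, xx, yy, zz, X_pow_eq, monomial_mul_monomial, toFinsupp]

theorem toFinsupp_ofFinsupp (d : Fin 3 →₀ ℕ) : toFinsupp (ofFinsupp d) = d := by
  ext i
  fin_cases i <;> simp [toFinsupp, ofFinsupp]

theorem ofFinsupp_add_toFinsupp (d : Fin 3 →₀ ℕ) (e : ℕ × ℕ × ℕ) :
    ofFinsupp (d + toFinsupp e) = ofFinsupp d + e := by
  simp [ofFinsupp, toFinsupp]
  rfl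

theorem deg_ofFinsupp (d : Fin 3 →₀ ℕ) : deg (ofFinsupp d) = d.degree := by
  simp [deg, ofFinsupp, Finsupp.degree_eq_sum, Fin.sum_univ_three, add_assoc]

theorem monomial_mem_Ig2_of_degree_eq_six {d : Fin 3 →₀ ℕ} (hd : d.degree = 6) :
    monomial d 1 ∈ Ig2 k := by
  rw [← toFinsupp_ofFinsupp d, ← mono_eq_monomial, ← Ideal.Quotient.eq_zero_iff_mem, mk_mono,
    normalForm_eq_none_of_five_lt_deg (by rw [deg_ofFinsupp]; omega), Option.elim_none]

theorem mk_monomial_mem_span (d : Fin 3 →₀ ℕ) (a : k) :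
    Ideal.Quotient.mk (Ig2 k) (monomial d a) ∈ Submodule.span k (Set.range (mons_g2 k)) := by
  rw [← mul_one a, ← smul_eq_mul, map_smul, ← Ideal.Quotient.mkₐ_eq_mk k, map_smul,
    Ideal.Quotient.mkₐ_eq_mk, ← toFinsupp_ofFinsupp d, ← mono_eq_monomial, mk_mono]
  refine Submodule.smul_mem _ _ ?_
  cases normalForm (ofFinsupp d) with
  | none => exact Submodule.zero_mem _
  | some i => exact Submodule.subset_span ⟨i, rfl⟩

theorem span_mons_g2_eq_top : Submodule.span k (Set.range (mons_g2 k)) = ⊤ := by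
  rw [eq_top_iff]
  rintro x -
  obtain ⟨f, rfl⟩ := Ideal.Quotient.mk_surjective x
  rw [Ideal.Quotient.mk_eq_mk_iff_sub_mem _ _ |>.2
      (sub_truncTotal_mem (fun _ ↦ monomial_mem_Ig2_of_degree_eq_six k) f),
    MvPolynomial.as_sum (truncTotal 6 f)]
  simp only [← MvPolynomial.coeToMvPowerSeries.ringHom_apply, map_sum]
  refine Submodule.sum_mem _ fun d _ ↦ ?_
  rw [MvPolynomial.coeToMvPowerSeries.ringHom_apply, MvPolynomial.coe_monomial]
  exact mk_monomial_mem_span k d _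

def lowDegree : Finset (Fin 3 →₀ ℕ) := (Finsupp.finite_of_degree_le 5).toFinset

def classVec (d : Fin 3 →₀ ℕ) : Fin 24 → k := (normalForm (ofFinsupp d)).elim 0 (Pi.single · 1)

def classSum : MvPowerSeries (Fin 3) k →ₗ[k] (Fin 24 → k) :=
  ∑ d ∈ lowDegree, (coeff d).smulRight (classVec k d)

theorem classSum_apply (f : MvPowerSeries (Fin 3) k) :
    classSum k f = ∑ d ∈ lowDegree, coeff d f • classVec k d := by
  simp [classSum]

theorem classSum_mul_mono (q : MvPowerSeries (Fin 3) k) (s : ℕ × ℕ × ℕ) :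
    classSum k (q * mono k s) =
      ∑ u ∈ lowDegree, coeff u q • (normalForm (ofFinsupp u + s)).elim 0 (Pi.single · 1) := by
  rw [classSum_apply, mono_eq_monomial, sum_coeff_mul_monomial_smul]
  · simp [classVec, ofFinsupp_add_toFinsupp]
  · simp only [lowDegree, Set.Finite.mem_toFinset, Set.mem_ofPred_eq]
    exact fun e he d hd ↦ (Finsupp.degree_mono hd).trans he
  · intro e he
    simp only [lowDegree, Set.Finite.mem_toFinset, Set.mem_ofPred_eq, not_le] at he
    rw [classVec, normalForm_eq_none_of_five_lt_deg (by rwa [deg_ofFinsupp]), Option.elim_none]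

theorem classSum_mul_rule {r} (hr : r ∈ rules) (q : MvPowerSeries (Fin 3) k) :
    classSum k (q * (mono k r.1 - r.2.elim 0 (mono k))) = 0 := by
  rw [mul_sub, map_sub, classSum_mul_mono]
  rcases r with ⟨s, _ | t⟩
  · simp [normalForm_add_lhs hr]
  · simp [classSum_mul_mono, normalForm_add_lhs hr]

theorem classSum_eq_zero_of_mem {f : MvPowerSeries (Fin 3) k} (hf : f ∈ Ig2 k) :
    classSum k f = 0 := by
  refine Ideal.map_eq_zero_of_mem_span (classSum k) (fun g hg q ↦ ?_) hf
  have rule := fun r hr ↦ classSum_mul_rule k (r := r) (by simpa [rules] using hr) q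
  simp only [Set.mem_insert_iff, Set.mem_singleton_iff] at hg
  rcases hg with rfl | rfl | rfl | rfl | rfl | rfl
  · simpa [mono] using rule ((1,2,0), none) (by simp)
  · simpa [mono] using rule ((1,1,1), none) (by simp)
  · simpa [mono] using rule ((0,1,2), none) (by simp)
  all_goals rw [← neg_sub, mul_neg, map_neg, neg_eq_zero]
  · simpa [mono] using rule ((0,3,1), some (4,0,0)) (by simp)
  · simpa [mono] using rule ((0,4,0), some (1,0,3)) (by simp)
  · simpa [mono] using rule ((0,0,4), some (3,1,0)) (by simp)

theorem classSum_mono_basisExp (i : Fin 24) :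
    classSum k (mono k (basisExp i)) = Pi.single i 1 := by
  rw [← one_mul (mono k _), classSum_mul_mono, Finset.sum_eq_single 0]
  · simp [ofFinsupp, Prod.mk_zero_zero, normalForm_basisExp]
  · intro u _ hu
    simp [coeff_one, hu]
  · simp [lowDegree]

theorem linearIndependent_mons_g2 : LinearIndependent k (mons_g2 k) := by
  rw [Fintype.linearIndependent_iff]
  intro a ha
  have hmem : ∑ i, a i • mono k (basisExp i) ∈ Ig2 k := by
    rw [← Ideal.Quotient.eq_zero_iff_mem, ← ha, ← Ideal.Quotient.mkₐ_eq_mk k, map_sum]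
    simp [mons_g2_eq_mk_mono]
  have := classSum_eq_zero_of_mem k hmem
  simp only [map_sum, map_smul, classSum_mono_basisExp] at this
  intro i
  simpa [Pi.single_apply] using congr_fun this i

end G2

theorem basis_g2 (k : Type*) [Field k] :
    Module.finrank k (MvPowerSeries (Fin 3) k ⧸ Ig2 k) = 24 ∧
    LinearIndependent k (mons_g2 k) ∧
    Submodule.span k (Set.range (mons_g2 k)) = ⊤ := by
  have hli := G2.linearIndependent_mons_g2 k
  have hsp := G2.span_mons_g2_eq_top k
  refine ⟨?_, hli, hsp⟩
  rw [Module.finrank_eq_card_basis (Module.Basis.mk hli hsp.ge), Fintype.card_fin]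
end
end
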